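/- arXiv:1801.04595 — 2 statements merged into one kernel-verified Lean document; each statement's English description precedes it below -/
import Mathlib

section
/- Let d ≥ 2 and G ≤ Aut(T_d) be a strongly fractal group such that every left Engel element of G lies in St_G(1). Then G has no nontrivial left Engel elements: L(G) = 1. -/
/-- Vertices of the rooted `d`-adic tree `T_d` are finite words over `Fin d`. -/
abbrev Vertex (d : ℕ) : Type := List (Fin d)

/-- A permutation of the vertices of `T_d` is a tree automorphism iff it (and its
inverse) preserves word length (levels) and the prefix relation (adjacency). -/
def IsTreeAut (d : ℕ) (e : Equiv.Perm (Vertex d)) : Prop :=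
  (∀ l, (e l).length = l.length) ∧ (∀ l, (e.symm l).length = l.length) ∧
    (∀ l₁ l₂ : Vertex d, l₁ <+: l₂ → e l₁ <+: e l₂) ∧
    (∀ l₁ l₂ : Vertex d, l₁ <+: l₂ → e.symm l₁ <+: e.symm l₂)

/-- The group `Aut T_d` of automorphisms of the rooted `d`-adic tree. -/
def treeAutGroup (d : ℕ) : Subgroup (Equiv.Perm (Vertex d)) where
  carrier := {e | IsTreeAut d e}
  one_mem' := ⟨fun _ => rfl, fun _ => rfl, fun _ _ h => h, fun _ _ h => h⟩
  mul_mem' := by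
    rintro a b ⟨ha1, ha2, ha3, ha4⟩ ⟨hb1, hb2, hb3, hb4⟩
    exact ⟨fun l => by simp [Equiv.Perm.mul_def, ha1, hb1],
      fun l => by simp [Equiv.Perm.mul_def, ha2, hb2],
      fun l₁ l₂ h => by simpa [Equiv.Perm.mul_def] using ha3 _ _ (hb3 _ _ h),
      fun l₁ l₂ h => by simpa [Equiv.Perm.mul_def] using hb4 _ _ (ha4 _ _ h)⟩
  inv_mem' := by
    rintro a ⟨ha1, ha2, ha3, ha4⟩
    exact ⟨ha2, fun l => ha1 l,
      ha4, fun l₁ l₂ h => ha3 _ _ h⟩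

/-- The `n`-th level stabilizer `St(n)` in `Aut T_d`: automorphisms fixing every
vertex of the first `n` levels. -/
def levelStab (d n : ℕ) : Subgroup (treeAutGroup d) where
  carrier := {g | ∀ l : Vertex d, l.length ≤ n → g.val l = l}
  one_mem' := fun _ _ => rfl
  mul_mem' := by
    intro a b ha hb l hl
    have : ((a * b : treeAutGroup d) : Equiv.Perm (Vertex d)) l = a.val (b.val l) := rfl
    rw [this, hb l hl, ha l hl]
  inv_mem' := by
    intro a ha l hl
    have h := ha l hl
    have : ((a⁻¹ : treeAutGroup d) : Equiv.Perm (Vertex d)) l = a.val⁻¹ l := rfl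
    rw [this]
    calc a.val⁻¹ l = a.val⁻¹ (a.val l) := by rw [h]
    _ = l := by simp

/-- `t` is the section of `g` at the first-level vertex `i`: for some first-level
vertex `j` (the image of `i` under `g`), `g (i w) = j (t w)` for all words `w`.
This uniquely determines `t`, and corresponds to the `i`-th component of the
canonical isomorphism `ψ : St(1) → (Aut T_d)^d` when `g ∈ St(1)` (where `j = i`). -/
def IsSection {d : ℕ} (g t : treeAutGroup d) (i : Fin d) : Prop :=
  ∃ j : Fin d, ∀ w : Vertex d, g.val (i :: w) = j :: t.val w

/-- Iterated commutator `[x, g, ..., g]` (with `n` copies of `g`), where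
`[x,g] = x⁻¹g⁻¹xg`, `engel x g 0 = x`. -/
def engel {G : Type*} [Group G] (x g : G) : ℕ → G
  | 0 => x
  | n + 1 => (engel x g n)⁻¹ * g⁻¹ * engel x g n * g

/-- `g` is a left Engel element of the subgroup `G`: for every `x ∈ G` some
iterated commutator `[x, g, ..., g]` is trivial. -/
def IsLeftEngelIn {X : Type*} [Group X] (G : Subgroup X) (g : X) : Prop :=
  ∀ x ∈ G, ∃ n, 1 ≤ n ∧ engel x g n = 1

/-!
The section `t` of a left Engel element `g ∈ St(1)` at a vertex `i` is again left Engel: given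
`x ∈ G`, strong fractality lifts it to some `h ∈ St_G(1)` with section `x` at `i`, and the
section of `[h, g, …, g]` at `i` is `[x, t, …, t]`. Since left Engel elements lie in `St(1)`,
induction on the length of a word shows that a left Engel element fixes every vertex.
-/

def IsFixingSection {d : ℕ} (g t : treeAutGroup d) (i : Fin d) : Prop :=
  ∀ w : Vertex d, g.val (i :: w) = i :: t.val w

lemma treeAutGroup.eq_one_of_forall_apply_eq {d : ℕ} {g : treeAutGroup d}
    (h : ∀ w : Vertex d, g.val w = w) : g = 1 :=
  Subtype.ext (Equiv.ext h)

lemma treeAutGroup.apply_nil {d : ℕ} (g : treeAutGroup d) : g.val [] = [] :=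
  List.length_eq_zero_iff.mp (g.property.1 [])

namespace IsFixingSection

variable {d : ℕ} {g g' t t' : treeAutGroup d} {i : Fin d}

lemma mul (hg : IsFixingSection g t i) (hg' : IsFixingSection g' t' i) :
    IsFixingSection (g * g') (t * t') i := fun w => by
  change g.val (g'.val (i :: w)) = i :: t.val (t'.val w)
  rw [hg', hg]

lemma inv (hg : IsFixingSection g t i) : IsFixingSection g⁻¹ t⁻¹ i := fun w => by
  change g.val⁻¹ (i :: w) = i :: t.val⁻¹ w
  rw [Equiv.Perm.inv_eq_iff_eq, hg, ← Equiv.Perm.mul_apply, mul_inv_cancel, Equiv.Perm.one_apply]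

lemma engel {x h : treeAutGroup d} (hh : IsFixingSection h x i) (hg : IsFixingSection g t i) :
    ∀ n, IsFixingSection (_root_.engel h g n) (_root_.engel x t n) i
  | 0 => hh
  | n + 1 => (((engel hh hg n).inv.mul hg.inv).mul (engel hh hg n)).mul hg

lemma eq_one_of_eq_one (hg : IsFixingSection g t i) (h1 : g = 1) : t = 1 :=
  treeAutGroup.eq_one_of_forall_apply_eq fun w => by
    simpa [h1] using (hg w).symm

end IsFixingSection

lemma IsSection.isFixingSection {d : ℕ} {g t : treeAutGroup d} {i : Fin d}
    (hs : IsSection g t i) (hg : g ∈ levelStab d 1) : IsFixingSection g t i := by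
  obtain ⟨j, hj⟩ := hs
  have hji : j = i := by
    simpa [treeAutGroup.apply_nil, hg [i] (by simp)] using (hj []).symm
  exact fun w => hji ▸ hj w

lemma IsLeftEngelIn.of_isFixingSection {d : ℕ} {G : Subgroup (treeAutGroup d)} {i : Fin d}
    (hfrac : ∀ x ∈ G, ∃ h, h ∈ G ∧ h ∈ levelStab d 1 ∧ IsSection h x i)
    {g t : treeAutGroup d} (hg : IsLeftEngelIn G g) (hs : IsFixingSection g t i) :
    IsLeftEngelIn G t := by
  intro x hx
  obtain ⟨h, hhG, hhSt, hhx⟩ := hfrac x hx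
  obtain ⟨n, hn, hengel⟩ := hg h hhG
  exact ⟨n, hn, ((hhx.isFixingSection hhSt).engel hs n).eq_one_of_eq_one hengel⟩

lemma IsLeftEngelIn.apply_eq_self {d : ℕ} {G : Subgroup (treeAutGroup d)}
    (hself : ∀ g ∈ G, ∀ i : Fin d, ∃ t ∈ G, IsSection g t i)
    (hfrac : ∀ i : Fin d, ∀ x ∈ G, ∃ h, h ∈ G ∧ h ∈ levelStab d 1 ∧ IsSection h x i)
    (hst : ∀ g ∈ G, IsLeftEngelIn G g → g ∈ levelStab d 1) :
    ∀ (w : Vertex d) {g : treeAutGroup d}, g ∈ G → IsLeftEngelIn G g → g.val w = w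
  | [], g, hgG, hg => hst g hgG hg [] (by simp)
  | i :: w, g, hgG, hg => by
    obtain ⟨t, htG, hts⟩ := hself g hgG i
    have hfix := hts.isFixingSection (hst g hgG hg)
    rw [hfix w, apply_eq_self hself hfrac hst w htG (hg.of_isFixingSection (hfrac i) hfix)]

theorem stmt_13_general (d : ℕ) (G : Subgroup (treeAutGroup d))
    (hself : ∀ g ∈ G, ∀ i : Fin d, ∃ t ∈ G, IsSection g t i)
    (hfrac : ∀ i : Fin d, ∀ x ∈ G, ∃ h, h ∈ G ∧ h ∈ levelStab d 1 ∧ IsSection h x i)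
    (hst : ∀ g ∈ G, IsLeftEngelIn G g → g ∈ levelStab d 1) :
    ∀ g ∈ G, IsLeftEngelIn G g → g = 1 := fun _ hgG hg =>
  treeAutGroup.eq_one_of_forall_apply_eq fun w => hg.apply_eq_self hself hfrac hst w hgG

theorem stmt_13 (d : ℕ) (hd : 2 ≤ d) (G : Subgroup (treeAutGroup d))
    (hself : ∀ g ∈ G, ∀ i : Fin d, ∃ t ∈ G, IsSection g t i)
    (hfrac : ∀ i : Fin d, ∀ x ∈ G, ∃ h, h ∈ G ∧ h ∈ levelStab d 1 ∧ IsSection h x i)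
    (hst : ∀ g ∈ G, IsLeftEngelIn G g → g ∈ levelStab d 1) :
    ∀ g ∈ G, IsLeftEngelIn G g → g = 1 :=
  stmt_13_general d G hself hfrac hst
end

section
/- Let H ≤ Aut(T₂) be the group generated by the rooted automorphism σ swapping the two subtrees and the adding machine x = (1, x)σ. Setting b = xσ, the first-level stabilizer St_H(1) equals ⟨b, b^σ⟩ and is free abelian of rank 2 (isomorphic to C∞ × C∞); in particular St_H(1)' = 1. -/
/-- The underlying vertex map of the rooted automorphism `σ` of the binary tree,
swapping the two maximal subtrees. -/
def swapFun : Vertex 2 → Vertex 2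
  | [] => []
  | i :: w => (i + 1) :: w

lemma swapFun_invol (l : Vertex 2) : swapFun (swapFun l) = l := by
  have h : ∀ i : Fin 2, i + 1 + 1 = i := by decide
  cases l with
  | nil => rfl
  | cons i w => simp [swapFun, h]

/-- The underlying vertex map of the binary adding machine `x = (1, x)σ`. -/
def addFun : Vertex 2 → Vertex 2
  | [] => []
  | i :: w => if i = 0 then 1 :: w else 0 :: addFun w

/-- The inverse of the vertex map of the adding machine. -/
def subFun : Vertex 2 → Vertex 2
  | [] => []
  | i :: w => if i = 1 then 0 :: w else 1 :: subFun w

lemma fin2_cases (i : Fin 2) : i = 0 ∨ i = 1 := by revert i; decide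

lemma subFun_addFun (l : Vertex 2) : subFun (addFun l) = l := by
  induction l with
  | nil => rfl
  | cons i w ih =>
    rcases fin2_cases i with h | h <;> subst h <;> simp [addFun, subFun, ih]

lemma addFun_subFun (l : Vertex 2) : addFun (subFun l) = l := by
  induction l with
  | nil => rfl
  | cons i w ih =>
    rcases fin2_cases i with h | h <;> subst h <;> simp [addFun, subFun, ih]

/-- The rooted automorphism `σ` of the binary tree as a permutation of vertices. -/
def swapPerm : Equiv.Perm (Vertex 2) :=
  ⟨swapFun, swapFun, swapFun_invol, swapFun_invol⟩

/-- The adding machine as a permutation of vertices. -/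
def addPerm : Equiv.Perm (Vertex 2) :=
  ⟨addFun, subFun, subFun_addFun, addFun_subFun⟩

lemma swapFun_length (l : Vertex 2) : (swapFun l).length = l.length := by
  cases l <;> simp [swapFun]

lemma addFun_length (l : Vertex 2) : (addFun l).length = l.length := by
  induction l with
  | nil => rfl
  | cons i w ih =>
    rcases fin2_cases i with h | h <;> subst h <;> simp [addFun, ih]

lemma subFun_length (l : Vertex 2) : (subFun l).length = l.length := by
  induction l with
  | nil => rfl
  | cons i w ih =>
    rcases fin2_cases i with h | h <;> subst h <;> simp [subFun, ih]

lemma swapFun_prefix (l₁ l₂ : Vertex 2) (h : l₁ <+: l₂) :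
    swapFun l₁ <+: swapFun l₂ := by
  cases l₁ with
  | nil => simp [swapFun]
  | cons i w =>
    cases l₂ with
    | nil => simp at h
    | cons j u =>
      rw [List.cons_prefix_cons] at h
      obtain ⟨rfl, hwu⟩ := h
      simpa [swapFun, List.cons_prefix_cons] using hwu

lemma addFun_prefix (l₁ : Vertex 2) : ∀ l₂, l₁ <+: l₂ → addFun l₁ <+: addFun l₂ := by
  induction l₁ with
  | nil => intro l₂ _; simp [addFun]
  | cons i w ih =>
    intro l₂ h
    cases l₂ with
    | nil => simp at h
    | cons j u =>
      rw [List.cons_prefix_cons] at h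
      obtain ⟨rfl, hwu⟩ := h
      rcases fin2_cases i with h1 | h1 <;> subst h1 <;>
        simp [addFun, List.cons_prefix_cons, hwu, ih _ hwu]

lemma subFun_prefix (l₁ : Vertex 2) : ∀ l₂, l₁ <+: l₂ → subFun l₁ <+: subFun l₂ := by
  induction l₁ with
  | nil => intro l₂ _; simp [subFun]
  | cons i w ih =>
    intro l₂ h
    cases l₂ with
    | nil => simp at h
    | cons j u =>
      rw [List.cons_prefix_cons] at h
      obtain ⟨rfl, hwu⟩ := h
      rcases fin2_cases i with h1 | h1 <;> subst h1 <;>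
        simp [subFun, List.cons_prefix_cons, hwu, ih _ hwu]

/-- The rooted automorphism `σ` swapping the two maximal subtrees, as an
element of `Aut T₂`. -/
def σ₂ : treeAutGroup 2 :=
  ⟨swapPerm, swapFun_length, swapFun_length, swapFun_prefix, swapFun_prefix⟩

/-- The adding machine `x = (1, x)σ` as an element of `Aut T₂`. -/
def addingMachine : treeAutGroup 2 :=
  ⟨addPerm, addFun_length, subFun_length,
    fun l₁ l₂ h => addFun_prefix l₁ l₂ h, fun l₁ l₂ h => subFun_prefix l₁ l₂ h⟩

/-- The group `H = ⟨σ, x⟩ ≤ Aut T₂`. -/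
def H₁₉ : Subgroup (treeAutGroup 2) := Subgroup.closure {σ₂, addingMachine}

/-- The element `b = xσ = (1, x)` of `St(1)`. -/
def b₁₉ : treeAutGroup 2 := σ₂ * addingMachine
section Aux19
open Equiv

abbrev V2 := Vertex 2

def glueFun (p q : V2 → V2) : V2 → V2
  | [] => []
  | (i :: w) => if i = 0 then 0 :: p w else 1 :: q w

lemma glueFun_glueFun (p q p' q' : V2 → V2) (hp : ∀ w, p' (p w) = w)
    (hq : ∀ w, q' (q w) = w) (l : V2) : glueFun p' q' (glueFun p q l) = l := by
  cases l with
  | nil => rfl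
  | cons i w =>
    rcases fin2_cases i with h | h <;> subst h <;>
      simp [glueFun, hp, hq]

def gluePerm (p q : Perm V2) : Perm V2 :=
  ⟨glueFun p q, glueFun p.symm q.symm,
    fun l => glueFun_glueFun _ _ _ _ (fun w => p.symm_apply_apply w)
      (fun w => q.symm_apply_apply w) l,
    fun l => glueFun_glueFun _ _ _ _ (fun w => p.apply_symm_apply w)
      (fun w => q.apply_symm_apply w) l⟩

def glueHom : Perm V2 × Perm V2 →* Perm V2 where
  toFun pq := gluePerm pq.1 pq.2
  map_one' := by
    apply Equiv.ext; intro l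
    cases l with
    | nil => rfl
    | cons i w =>
      rcases fin2_cases i with h | h <;> subst h <;>
        simp [gluePerm, glueFun]
  map_mul' a b := by
    apply Equiv.ext; intro l
    cases l with
    | nil => rfl
    | cons i w =>
      rcases fin2_cases i with h | h <;> subst h <;>
        simp [gluePerm, glueFun, Equiv.Perm.mul_apply]

lemma glueHom_eq_one {p q : Perm V2} (h : glueHom (p, q) = 1) : p = 1 ∧ q = 1 := by
  constructor <;> (apply Equiv.ext; intro w)
  · have := DFunLike.congr_fun h ((0 : Fin 2) :: w)
    simpa [glueHom, gluePerm, glueFun] using this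
  · have := DFunLike.congr_fun h ((1 : Fin 2) :: w)
    simpa [glueHom, gluePerm, glueFun] using this

lemma fin2_add01 : (0 : Fin 2) + 1 = 1 := by decide
lemma fin2_add11 : (1 : Fin 2) + 1 = 0 := by decide

lemma b_val : (b₁₉ : Perm V2) = glueHom (1, addPerm) := by
  apply Equiv.ext; intro l
  show swapFun (addFun l) = _
  cases l with
  | nil => rfl
  | cons i w =>
    rcases fin2_cases i with h | h <;> subst h <;>
      simp [addFun, swapFun, glueHom, gluePerm, glueFun, addPerm, fin2_add01, fin2_add11]

lemma c_val : ((σ₂⁻¹ * b₁₉ * σ₂ : treeAutGroup 2) : Perm V2) = glueHom (addPerm, 1) := by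
  have hσ : ((σ₂⁻¹ : treeAutGroup 2) : Perm V2) = swapPerm := rfl
  apply Equiv.ext; intro l
  rw [show ((σ₂⁻¹ * b₁₉ * σ₂ : treeAutGroup 2) : Perm V2)
      = ((σ₂⁻¹ : treeAutGroup 2) : Perm V2) * (b₁₉ : Perm V2) * (σ₂ : Perm V2) from rfl,
    b_val, hσ]
  cases l with
  | nil => rfl
  | cons i w =>
    rcases fin2_cases i with h | h <;> subst h <;>
      simp [σ₂, swapPerm, swapFun, glueHom, gluePerm, glueFun, Equiv.Perm.mul_apply,
        fin2_add01, fin2_add11]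

lemma sigma_sq : σ₂ * σ₂ = 1 := by
  apply Subtype.ext; apply Equiv.ext; intro l; exact swapFun_invol l

lemma sigma_inv : σ₂⁻¹ = σ₂ := (inv_eq_of_mul_eq_one_right sigma_sq).symm

lemma coe_mul' : ∀ u v : treeAutGroup 2, ((u * v : treeAutGroup 2) : Perm V2) = ↑u * ↑v :=
  fun _ _ => rfl

lemma comm_bc : Commute b₁₉ (σ₂⁻¹ * b₁₉ * σ₂) := by
  apply Subtype.ext
  rw [coe_mul' b₁₉ (σ₂⁻¹ * b₁₉ * σ₂), coe_mul' (σ₂⁻¹ * b₁₉ * σ₂) b₁₉, b_val, c_val,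
    ← map_mul, ← map_mul]
  congr 1

lemma addFun_addFun (i : Fin 2) (w : V2) : addFun (addFun (i :: w)) = i :: addFun w := by
  rcases fin2_cases i with h | h <;> subst h <;> simp [addFun]

lemma addFun_iterate_two (q : ℕ) (i : Fin 2) (w : V2) :
    addFun^[2 * q] (i :: w) = i :: addFun^[q] w := by
  induction q generalizing w with
  | zero => rfl
  | succ q ih =>
    have h2 : 2 * (q + 1) = 2 * q + 2 := by ring
    rw [h2, Function.iterate_add_apply,
      show addFun^[2] (i :: w) = i :: addFun w from addFun_addFun i w, ih,
      Function.iterate_succ_apply]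

lemma addFun_key : ∀ k n : ℕ, 0 < n → n < 2 ^ k →
    addFun^[n] (List.replicate k 0) ≠ List.replicate k 0 := by
  intro k
  induction k with
  | zero => intro n hn h2; omega
  | succ k ih =>
    intro n hn h2
    have hrep : List.replicate (k + 1) (0 : Fin 2) = 0 :: List.replicate k 0 :=
      List.replicate_succ
    rcases Nat.mod_two_eq_zero_or_one n with hr | hr
    · have hq : 0 < n / 2 := by omega
      have hq2 : n / 2 < 2 ^ k := by
        have : 2 ^ (k + 1) = 2 * 2 ^ k := by ring
        omega
      rw [hrep, show n = 2 * (n / 2) by omega, addFun_iterate_two]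
      intro hcontra
      exact ih (n / 2) hq hq2 (List.cons_injective hcontra)
    · rw [hrep, show n = 2 * (n / 2) + 1 by omega, Function.iterate_add_apply,
        Function.iterate_one, show addFun ((0 : Fin 2) :: List.replicate k 0)
          = 1 :: List.replicate k 0 by simp [addFun],
        addFun_iterate_two]
      intro hcontra
      rw [List.cons_eq_cons] at hcontra
      exact absurd hcontra.1 (by decide)

lemma addPerm_pow_ne (n : ℕ) (hn : 0 < n) : addPerm ^ n ≠ 1 := by
  intro h
  have hlt : n < 2 ^ n := Nat.lt_two_pow_self
  have h2 := DFunLike.congr_fun h (List.replicate n 0)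
  rw [Equiv.Perm.coe_pow] at h2
  exact addFun_key n n hn hlt (by exact h2)

lemma addPerm_zpow_eq_one {m : ℤ} (h : addPerm ^ m = 1) : m = 0 := by
  by_contra hm
  have hnat : addPerm ^ m.natAbs = 1 := by
    rcases Int.natAbs_eq m with he | he
    · rw [he, zpow_natCast] at h; exact h
    · rw [he, zpow_neg, zpow_natCast, inv_eq_one] at h; exact h
  exact addPerm_pow_ne m.natAbs (by omega) hnat

lemma bc_pow_val (m n : ℤ) :
    ((b₁₉ ^ m * (σ₂⁻¹ * b₁₉ * σ₂) ^ n : treeAutGroup 2) : Perm V2)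
      = glueHom (addPerm ^ n, addPerm ^ m) := by
  have h1 : ((b₁₉ ^ m * (σ₂⁻¹ * b₁₉ * σ₂) ^ n : treeAutGroup 2) : Perm V2)
      = (b₁₉ : Perm V2) ^ m * ((σ₂⁻¹ * b₁₉ * σ₂ : treeAutGroup 2) : Perm V2) ^ n := by
    push_cast
    rfl
  rw [h1, b_val, c_val, ← map_zpow, ← map_zpow, ← map_mul]
  congr 1
  ext
  · simp [Prod.pow_fst]
  · simp [Prod.pow_snd]

end Aux19
section Aux19b
open Equiv Subgroup

/-- elements of glue shape (with sections fixing []) lie in the first level stabilizer -/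
lemma glue_mem_stab (g : treeAutGroup 2) (p q : Perm V2)
    (h : (g : Perm V2) = glueHom (p, q)) (hp : p [] = []) (hq : q [] = []) :
    g ∈ levelStab 2 1 := by
  intro l hl
  rw [h]
  cases l with
  | nil => rfl
  | cons i w =>
    have hw : w = [] := by
      simp only [List.length_cons] at hl
      exact List.eq_nil_of_length_eq_zero (by omega)
    subst hw
    rcases fin2_cases i with h | h <;> subst h <;>
      simp [glueHom, gluePerm, glueFun, hp, hq]

lemma b_mem_stab : b₁₉ ∈ levelStab 2 1 :=
  glue_mem_stab _ _ _ b_val rfl rfl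

lemma c_mem_stab : σ₂⁻¹ * b₁₉ * σ₂ ∈ levelStab 2 1 :=
  glue_mem_stab _ _ _ c_val rfl rfl

lemma sigma_not_stab : σ₂ ∉ levelStab 2 1 := by
  intro h
  have h1 := h [(0 : Fin 2)] (by simp)
  have h2 : (σ₂ : Perm V2) [(0 : Fin 2)] = [(1 : Fin 2)] := by
    show swapFun [(0 : Fin 2)] = _
    simp [swapFun, fin2_add01]
  rw [h2] at h1
  rw [List.cons_eq_cons] at h1
  exact absurd h1.1 (by decide)

lemma b_mem_H : b₁₉ ∈ H₁₉ :=
  mul_mem (subset_closure (Set.mem_insert _ _))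
    (subset_closure (Set.mem_insert_of_mem _ rfl))

lemma sigma_mem_H : σ₂ ∈ H₁₉ := subset_closure (Set.mem_insert _ _)

lemma c_mem_H : σ₂⁻¹ * b₁₉ * σ₂ ∈ H₁₉ :=
  mul_mem (mul_mem (inv_mem sigma_mem_H) b_mem_H) sigma_mem_H

/-- K denotes the closure of {b, σ⁻¹bσ} -/
lemma conj_mem_K : ∀ g ∈ Subgroup.closure {b₁₉, σ₂⁻¹ * b₁₉ * σ₂},
    σ₂ * g * σ₂ ∈ Subgroup.closure {b₁₉, σ₂⁻¹ * b₁₉ * σ₂} := by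
  intro g hg
  induction hg using Subgroup.closure_induction with
  | mem x hx =>
    rcases hx with h | h
    · subst h
      have : σ₂ * b₁₉ * σ₂ = σ₂⁻¹ * b₁₉ * σ₂ := by rw [sigma_inv]
      rw [this]
      exact subset_closure (Set.mem_insert_of_mem _ rfl)
    · simp only [Set.mem_singleton_iff] at h
      subst h
      have : σ₂ * (σ₂⁻¹ * b₁₉ * σ₂) * σ₂ = (σ₂ * σ₂⁻¹) * b₁₉ * (σ₂ * σ₂) := by group
      rw [this, sigma_sq, mul_inv_cancel, one_mul, mul_one]
      exact subset_closure (Set.mem_insert _ _)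
  | one =>
    rw [mul_one, sigma_sq]
    exact one_mem _
  | mul x y hx hy ihx ihy =>
    have key : σ₂ * (x * y) * σ₂ = (σ₂ * x * σ₂) * (σ₂ * y * σ₂) := by
      rw [show (σ₂ * x * σ₂) * (σ₂ * y * σ₂) = σ₂ * x * ((σ₂ * σ₂) * (y * σ₂)) from by group,
        sigma_sq, one_mul]
      group
    rw [key]
    exact mul_mem ihx ihy
  | inv x hx ihx =>
    have key : σ₂ * x⁻¹ * σ₂ = (σ₂ * x * σ₂)⁻¹ := by
      rw [mul_inv_rev, mul_inv_rev, sigma_inv, mul_assoc]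
    rw [key]
    exact inv_mem ihx

lemma H_decomp : ∀ g ∈ H₁₉, g ∈ Subgroup.closure {b₁₉, σ₂⁻¹ * b₁₉ * σ₂} ∨
    σ₂ * g ∈ Subgroup.closure {b₁₉, σ₂⁻¹ * b₁₉ * σ₂} := by
  intro g hg
  induction hg using Subgroup.closure_induction with
  | mem x hx =>
    rcases hx with h | h
    · subst h
      right
      rw [sigma_sq]
      exact one_mem _
    · simp only [Set.mem_singleton_iff] at h
      subst h
      right
      exact subset_closure (Set.mem_insert _ _)
  | one => left; exact one_mem _
  | mul x y hx hy ihx ihy =>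
    rcases ihx with ih1 | ih1 <;> rcases ihy with ih2 | ih2
    · left; exact mul_mem ih1 ih2
    · right
      have key : σ₂ * (x * y) = (σ₂ * x * σ₂) * (σ₂ * y) := by
        rw [show (σ₂ * x * σ₂) * (σ₂ * y) = σ₂ * x * ((σ₂ * σ₂) * y) from by group,
          sigma_sq, one_mul, mul_assoc]
      rw [key]
      exact mul_mem (conj_mem_K x ih1) ih2
    · right
      rw [show σ₂ * (x * y) = (σ₂ * x) * y by group]
      exact mul_mem ih1 ih2
    · left
      have key : x * y = (σ₂ * (σ₂ * x) * σ₂) * (σ₂ * y) := by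
        rw [show (σ₂ * (σ₂ * x) * σ₂) * (σ₂ * y) = (σ₂ * σ₂) * x * ((σ₂ * σ₂) * y) from by
          group, sigma_sq, one_mul, one_mul]
      rw [key]
      exact mul_mem (conj_mem_K _ ih1) ih2
  | inv x hx ihx =>
    rcases ihx with ih | ih
    · left; exact inv_mem ih
    · right
      rw [show σ₂ * x⁻¹ = σ₂ * (σ₂ * x)⁻¹ * σ₂ by group]
      exact conj_mem_K _ (inv_mem ih)

lemma part1 : H₁₉ ⊓ levelStab 2 1 = Subgroup.closure {b₁₉, σ₂⁻¹ * b₁₉ * σ₂} := by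
  apply le_antisymm
  · rintro g ⟨hH, hSt⟩
    rcases H_decomp g hH with h | h
    · exact h
    · exfalso
      apply sigma_not_stab
      have hK_stab : Subgroup.closure {b₁₉, σ₂⁻¹ * b₁₉ * σ₂} ≤ levelStab 2 1 := by
        rw [Subgroup.closure_le]
        rintro x (h | h)
        · subst h; exact b_mem_stab
        · simp only [Set.mem_singleton_iff] at h; subst h; exact c_mem_stab
      have : σ₂ = (σ₂ * g) * g⁻¹ := by group
      rw [this]
      exact mul_mem (hK_stab h) (inv_mem hSt)
  · rw [Subgroup.closure_le]
    rintro x (h | h)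
    · subst h; exact ⟨b_mem_H, b_mem_stab⟩
    · simp only [Set.mem_singleton_iff] at h; subst h; exact ⟨c_mem_H, c_mem_stab⟩

/-- the homomorphism ℤ × ℤ → Aut T₂, (m, n) ↦ bᵐ(σ⁻¹bσ)ⁿ -/
def Ψ₁₉ : Multiplicative ℤ × Multiplicative ℤ →* treeAutGroup 2 where
  toFun p := b₁₉ ^ (Multiplicative.toAdd p.1) * (σ₂⁻¹ * b₁₉ * σ₂) ^ (Multiplicative.toAdd p.2)
  map_one' := by simp
  map_mul' p q := by
    simp only [Prod.fst_mul, Prod.snd_mul, toAdd_mul]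
    rw [zpow_add, zpow_add]
    have hc := comm_bc.symm.zpow_zpow (Multiplicative.toAdd p.2)
      (Multiplicative.toAdd q.1)
    rw [hc.mul_mul_mul_comm]

lemma psi_apply (p : Multiplicative ℤ × Multiplicative ℤ) :
    Ψ₁₉ p = b₁₉ ^ (Multiplicative.toAdd p.1)
      * (σ₂⁻¹ * b₁₉ * σ₂) ^ (Multiplicative.toAdd p.2) := rfl

lemma psi_inj : Function.Injective Ψ₁₉ := by
  rw [injective_iff_map_eq_one]
  intro p hp
  rw [psi_apply] at hp
  have hval : ((b₁₉ ^ (Multiplicative.toAdd p.1)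
      * (σ₂⁻¹ * b₁₉ * σ₂) ^ (Multiplicative.toAdd p.2) : treeAutGroup 2) : Equiv.Perm V2)
      = ((1 : treeAutGroup 2) : Equiv.Perm V2) := congrArg Subtype.val hp
  rw [bc_pow_val] at hval
  have h1 : ((1 : treeAutGroup 2) : Equiv.Perm V2) = 1 := rfl
  rw [h1] at hval
  obtain ⟨ha, hb⟩ := glueHom_eq_one hval
  have hm : Multiplicative.toAdd p.1 = 0 := addPerm_zpow_eq_one hb
  have hn : Multiplicative.toAdd p.2 = 0 := addPerm_zpow_eq_one ha
  have : p = (Multiplicative.ofAdd 0, Multiplicative.ofAdd 0) := by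
    apply Prod.ext
    · exact (Multiplicative.toAdd).injective (by simpa using hm)
    · exact (Multiplicative.toAdd).injective (by simpa using hn)
  exact this

lemma psi_range : Ψ₁₉.range = Subgroup.closure {b₁₉, σ₂⁻¹ * b₁₉ * σ₂} := by
  apply le_antisymm
  · rintro _ ⟨p, rfl⟩
    rw [psi_apply]
    have hb : b₁₉ ∈ Subgroup.closure {b₁₉, σ₂⁻¹ * b₁₉ * σ₂} :=
      subset_closure (Set.mem_insert _ _)
    have hcm : σ₂⁻¹ * b₁₉ * σ₂ ∈ Subgroup.closure {b₁₉, σ₂⁻¹ * b₁₉ * σ₂} :=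
      subset_closure (Set.mem_insert_of_mem _ rfl)
    exact mul_mem (zpow_mem hb _) (zpow_mem hcm _)
  · rw [Subgroup.closure_le]
    rintro x (h | h)
    · subst h
      exact ⟨(Multiplicative.ofAdd 1, Multiplicative.ofAdd 0), by
        rw [psi_apply]; simp⟩
    · simp only [Set.mem_singleton_iff] at h; subst h
      exact ⟨(Multiplicative.ofAdd 0, Multiplicative.ofAdd 1), by
        rw [psi_apply]; simp⟩

end Aux19b

theorem stmt_19 :
    H₁₉ ⊓ levelStab 2 1 = Subgroup.closure {b₁₉, σ₂⁻¹ * b₁₉ * σ₂} ∧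
      Nonempty (↥(H₁₉ ⊓ levelStab 2 1) ≃* Multiplicative ℤ × Multiplicative ℤ) ∧
      commutator ↥(H₁₉ ⊓ levelStab 2 1) = ⊥ := by
  have hEq : H₁₉ ⊓ levelStab 2 1 = Ψ₁₉.range := part1.trans psi_range.symm
  have e : ↥(H₁₉ ⊓ levelStab 2 1) ≃* Multiplicative ℤ × Multiplicative ℤ :=
    (MulEquiv.subgroupCongr hEq).trans (MonoidHom.ofInjective psi_inj).symm
  refine ⟨part1, ⟨e⟩, ?_⟩
  have hcomm : ∀ g h : ↥(H₁₉ ⊓ levelStab 2 1), g * h = h * g := by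
    intro g h
    apply e.injective
    rw [map_mul, map_mul, mul_comm]
  rw [commutator_def, eq_bot_iff, Subgroup.commutator_le]
  intro g _ h _
  rw [Subgroup.mem_bot, commutatorElement_def, hcomm g h]
  group
end
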